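/- Constant dynamics, inductive case: suppose the vector fields are constant, i.e., f q = fun _ => a q for a fixed map a : Q → E, and suppose Q has at least two elements. Then for every q : Q, every i ≥ 1, every x₀ : E, and every τ ≥ 0: (x₀, τ) ∈ X q i if and only if there exist a mode q' : Q with q' ≠ q and δ ≥ 0 such that (x₀ + δ • a q, τ + δ) ∈ X q' (i-1) and φ₁ (x₀ + h • a q) (τ + h) for all h ∈ Set.Icc 0 δ. (Paper's Corollary 2 specialized to equation (4).) -/

import Mathlib

/-! With constant vector fields a trajectory is affine, `x t = x₀ + (t - τ) • a q`, for as long as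
the controller stays in mode `q`. Cutting a satisfying controller at its first switch to another
mode before the satisfaction time `τ'` leaves a controller with one switch fewer from the switching
point; if there is no such switch, the state reached at `τ'` already satisfies the specification
under a controller without switches, in any mode. Conversely, prepending the affine segment of
mode `q` to a controller from `(x₀ + δ • a q, τ + δ)` costs one switch. -/

open Set

noncomputable section

/-- The state space: `EuclideanSpace ℝ (Fin n)`. -/
abbrev E (n : ℕ) := EuclideanSpace ℝ (Fin n)

/-- A controller from time `τ` with at most `i` switches: a finite sequence
`(q₀,t₀),…,(q_k,t_k)` with `k ≤ i`, `t 0 = τ` and nondecreasing switching times. -/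
structure Controller (Q : Type) (τ : ℝ) (i : ℕ) where
  k : ℕ
  hk : k ≤ i
  q : ℕ → Q
  t : ℕ → ℝ
  ht0 : t 0 = τ
  mono : ∀ j, j < k → t j ≤ t (j + 1)

/-- `Sat x τ`: the signal `x` satisfies `φ₁ U_{I ⊖ τ} φ₂` from time `τ`. -/
def Sat {n : ℕ} (φ₁ φ₂ : E n → ℝ → Prop) (l u : ℝ) (x : ℝ → E n) (τ : ℝ) : Prop :=
  ∃ τ', τ ≤ τ' ∧ τ' - τ ∈ Set.Icc (l - τ) (u - τ) ∩ Set.Ici (0 : ℝ) ∧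
    φ₂ (x τ') τ' ∧ ∀ τ'' ∈ Set.Icc τ τ', φ₁ (x τ'') τ''

/-- `x` is a trajectory under the controller `c` from `(x₀, τ)`. -/
def IsTraj {n : ℕ} {Q : Type} (f : Q → E n → E n) {τ : ℝ} {i : ℕ}
    (c : Controller Q τ i) (x₀ : E n) (x : ℝ → E n) : Prop :=
  ContinuousOn x (Set.Ici τ) ∧ x τ = x₀ ∧
    ∀ j ≤ c.k, ∀ s : ℝ, c.t j ≤ s → (j < c.k → s < c.t (j + 1)) →
      HasDerivWithinAt x (f (c.q j) (x s)) (Set.Ici s) s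

/-- The state-time set `X q i`. -/
def X {n : ℕ} {Q : Type} (φ₁ φ₂ : E n → ℝ → Prop) (l u : ℝ) (f : Q → E n → E n)
    (q : Q) (i : ℕ) : Set (E n × ℝ) :=
  {p | 0 ≤ p.2 ∧ ∃ c : Controller Q p.2 i, c.q 0 = q ∧
    ∃ x : ℝ → E n, IsTraj f c p.1 x ∧ Sat φ₁ φ₂ l u x p.2}

/-- A mode-`q` trajectory from `(x₀, τ)` (trajectory under the single-element
controller `(q, τ)`). -/
def IsModeTraj {n : ℕ} {Q : Type} (f : Q → E n → E n) (q : Q) (x₀ : E n) (τ : ℝ)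
    (x : ℝ → E n) : Prop :=
  ContinuousOn x (Set.Ici τ) ∧ x τ = x₀ ∧
    ∀ s : ℝ, τ ≤ s → HasDerivWithinAt x (f q (x s)) (Set.Ici s) s

/-- `Ψ` is a global flow for mode `q`. -/
def IsGlobalFlow {n : ℕ} {Q : Type} (f : Q → E n → E n) (q : Q)
    (Ψ : E n → ℝ → ℝ → E n) : Prop :=
  (∀ x₀ τ, Ψ x₀ τ τ = x₀) ∧
  (∀ (x₀ : E n) (τ t : ℝ), HasDerivAt (fun s => Ψ x₀ τ s) (f q (Ψ x₀ τ t)) t) ∧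
  (∀ (x₀ : E n) (τ : ℝ) (x : ℝ → E n),
      IsModeTraj f q x₀ τ x → Set.EqOn x (Ψ x₀ τ) (Set.Ici τ))

/-- Relaxing the switching bound of a controller. -/
def Controller.relax {Q : Type} {τ : ℝ} {i j : ℕ} (h : i ≤ j)
    (c : Controller Q τ i) : Controller Q τ j :=
  ⟨c.k, c.hk.trans h, c.q, c.t, c.ht0, c.mono⟩

/-- Prepend the pair `(q, τ)` to a controller from time `τ' ≥ τ`. -/
def Controller.prepend {Q : Type} {τ' : ℝ} {i : ℕ} (q : Q) (τ : ℝ) (h : τ ≤ τ')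
    (c : Controller Q τ' i) : Controller Q τ (i + 1) where
  k := c.k + 1
  hk := Nat.succ_le_succ c.hk
  q := fun j => match j with | 0 => q | Nat.succ m => c.q m
  t := fun j => match j with | 0 => τ | Nat.succ m => c.t m
  ht0 := rfl
  mono := by
    intro j hj
    cases j with
    | zero => show τ ≤ c.t 0; rw [c.ht0]; exact h
    | succ m =>
        show c.t m ≤ c.t (m + 1)
        exact c.mono m (Nat.lt_of_succ_lt_succ hj)

namespace Controller

variable {Q : Type} {τ : ℝ} {i : ℕ}

theorem t_mono (c : Controller Q τ i) {j₁ j₂ : ℕ} (h : j₁ ≤ j₂) (hk : j₂ ≤ c.k) :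
    c.t j₁ ≤ c.t j₂ := by
  induction j₂, h using Nat.le_induction with
  | base => exact le_rfl
  | succ m _ ih => exact (ih (by omega)).trans (c.mono m (by omega))

theorem le_t (c : Controller Q τ i) {j : ℕ} (hj : j ≤ c.k) : τ ≤ c.t j :=
  c.ht0.symm.trans_le (c.t_mono (Nat.zero_le j) hj)

def drop (c : Controller Q τ i) (J : ℕ) : Controller Q (c.t J) (i - J) where
  k := c.k - J
  hk := Nat.sub_le_sub_right c.hk J
  q j := c.q (J + j)
  t j := c.t (J + j)
  ht0 := rfl
  mono j hj := c.mono (J + j) (by omega)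

end Controller

section Trajectories

variable {n : ℕ} {Q : Type} {τ : ℝ} {i : ℕ} {c : Controller Q τ i} {x₀ : E n} {x : ℝ → E n}

theorem IsTraj.exists_piece {f : Q → E n → E n} (hx : IsTraj f c x₀ x) {s : ℝ} (hs : τ ≤ s) :
    ∃ j ≤ c.k, c.t j ≤ s ∧ HasDerivWithinAt x (f (c.q j) (x s)) (Ici s) s := by
  classical
  set j := Nat.findGreatest (fun j => c.t j ≤ s) c.k
  have hjs : c.t j ≤ s := Nat.findGreatest_spec (P := fun j => c.t j ≤ s) (Nat.zero_le _)
    (c.ht0.trans_le hs)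
  refine ⟨j, Nat.findGreatest_le _, hjs, hx.2.2 j (Nat.findGreatest_le _) s hjs fun hjk => ?_⟩
  exact lt_of_not_ge (Nat.findGreatest_is_greatest (Nat.lt_succ_self j) hjk)

theorem IsTraj.drop {f : Q → E n → E n} (hx : IsTraj f c x₀ x) {J : ℕ} (hJ : J ≤ c.k) :
    IsTraj f (c.drop J) (x (c.t J)) x :=
  ⟨hx.1.mono (Ici_subset_Ici.2 (c.le_t hJ)), rfl, fun j hj s hjs hlt =>
    hx.2.2 (J + j) (by simp only [Controller.drop] at hj; omega) s hjs fun h =>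
      hlt (by simp only [Controller.drop]; omega)⟩

theorem piecewise_Iic_eqOn_Ici {α : Type*} {σ : ℝ} {y x : ℝ → α} [DecidablePred (· ∈ Iic σ)]
    (h : y σ = x σ) : EqOn ((Iic σ).piecewise y x) x (Ici σ) := fun t ht => by
  by_cases hts : t ≤ σ
  · rw [piecewise_eq_of_mem _ _ _ (mem_Iic.2 hts), le_antisymm hts ht, h]
  · exact piecewise_eq_of_notMem _ _ _ hts

theorem IsTraj.prepend {f : Q → E n → E n} {σ : ℝ} {c : Controller Q σ i} {q : Q} {y : ℝ → E n}
    (hτσ : τ ≤ σ) (hy : ContinuousOn y (Icc τ σ))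
    (hy' : ∀ s ∈ Ico τ σ, HasDerivWithinAt y (f q (y s)) (Ici s) s)
    (hx : IsTraj f c (y σ) x) :
    IsTraj f (c.prepend q τ hτσ) (y τ) ((Iic σ).piecewise y x) := by
  classical
  have hx_eq := piecewise_Iic_eqOn_Ici hx.2.1.symm
  have hy_eq : EqOn ((Iic σ).piecewise y x) y (Iic σ) := fun t ht => piecewise_eq_of_mem _ _ _ ht
  refine ⟨?_, hy_eq (mem_Iic.2 hτσ), ?_⟩
  · rw [← Icc_union_Ici_eq_Ici hτσ]
    exact (hy.congr fun t ht => hy_eq ht.2).union_of_isClosed (hx.1.congr hx_eq) isClosed_Icc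
      isClosed_Ici
  · rintro (_ | m) hm s hs hlt
    · have hsσ : s < σ := c.ht0 ▸ hlt (by simp [Controller.prepend])
      rw [hy_eq hsσ.le]
      refine (hy' s ⟨hs, hsσ⟩).congr_of_eventuallyEq ?_ (hy_eq hsσ.le)
      filter_upwards [mem_nhdsWithin_of_mem_nhds (Iic_mem_nhds hsσ)] with t ht using hy_eq ht
    · have hm : m ≤ c.k := by simp only [Controller.prepend] at hm; omega
      have hσs : σ ≤ s := (c.le_t hm).trans hs
      rw [hx_eq hσs]
      exact (hx.2.2 m hm s hs fun h => hlt (by simp only [Controller.prepend]; omega)).congr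
        (fun t ht => hx_eq (hσs.trans ht)) (hx_eq hσs)

end Trajectories

section ConstantDynamics

variable {n : ℕ} {Q : Type} {φ₁ φ₂ : E n → ℝ → Prop} {l u : ℝ} {a : Q → E n}

theorem sat_iff {x : ℝ → E n} {τ : ℝ} :
    Sat φ₁ φ₂ l u x τ ↔
      ∃ τ', τ ≤ τ' ∧ l ≤ τ' ∧ τ' ≤ u ∧ φ₂ (x τ') τ' ∧ ∀ t ∈ Icc τ τ', φ₁ (x t) t := by
  simp only [Sat, mem_inter_iff, mem_Icc, mem_Ici, sub_le_sub_iff_right, sub_nonneg]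
  constructor
  · rintro ⟨τ', hτ', ⟨⟨hl, hu⟩, -⟩, h₂, h₁⟩
    exact ⟨τ', hτ', hl, hu, h₂, h₁⟩
  · rintro ⟨τ', hτ', hl, hu, h₂, h₁⟩
    exact ⟨τ', hτ', ⟨⟨hl, hu⟩, hτ'⟩, h₂, h₁⟩

theorem hasDerivAt_add_sub_smul (p v : E n) (b s : ℝ) :
    HasDerivAt (fun t : ℝ => p + (t - b) • v) v s := by
  simpa using (((hasDerivAt_id s).sub_const b).smul_const v).const_add p

theorem IsTraj.eq_add_smul {τ : ℝ} {i : ℕ} {c : Controller Q τ i} {x₀ : E n} {x : ℝ → E n}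
    (hx : IsTraj (fun q _ => a q) c x₀ x) {q : Q} {T : ℝ}
    (hq : ∀ j ≤ c.k, c.t j < T → c.q j = q) : ∀ t ∈ Icc τ T, x t = x₀ + (t - τ) • a q := by
  refine eq_of_has_deriv_right_eq (f' := fun _ => a q) (fun s hs => ?_)
    (fun s _ => (hasDerivAt_add_sub_smul _ _ _ s).hasDerivWithinAt)
    (hx.1.mono Icc_subset_Ici_self) (by fun_prop) (by simp [hx.2.1])
  obtain ⟨j, hj, hjs, hd⟩ := hx.exists_piece hs.1
  rwa [hq j hj (hjs.trans_lt hs.2)] at hd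

theorem mem_X_of_sat_immediately {q : Q} {i : ℕ} {p : E n} {σ : ℝ} (hσ : 0 ≤ σ) (hlσ : l ≤ σ)
    (hσu : σ ≤ u) (h₂ : φ₂ p σ) (h₁ : φ₁ p σ) :
    (p, σ) ∈ X φ₁ φ₂ l u (fun q _ => a q) q i := by
  refine ⟨hσ, ⟨0, Nat.zero_le i, fun _ => q, fun _ => σ, rfl, fun _ _ => le_rfl⟩, rfl,
    fun t => p + (t - σ) • a q, ⟨by fun_prop, by simp, fun _ _ s _ _ =>
      (hasDerivAt_add_sub_smul _ _ _ s).hasDerivWithinAt⟩, sat_iff.2 ⟨σ, le_rfl, hlσ, hσu, ?_, ?_⟩⟩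
  · simpa using h₂
  · intro t ht
    obtain rfl : t = σ := le_antisymm ht.2 ht.1
    simpa using h₁

theorem exists_switch_of_mem_X [Nontrivial Q] {q : Q} {i : ℕ} {x₀ : E n} {τ : ℝ}
    (hmem : (x₀, τ) ∈ X φ₁ φ₂ l u (fun q _ => a q) q i) :
    ∃ q' : Q, q' ≠ q ∧ ∃ δ ≥ (0 : ℝ),
      (x₀ + δ • a q, τ + δ) ∈ X φ₁ φ₂ l u (fun q _ => a q) q' (i - 1) ∧
      ∀ h ∈ Icc (0 : ℝ) δ, φ₁ (x₀ + h • a q) (τ + h) := by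
  obtain ⟨hτ, c, hc0, x, hx, hsat⟩ := hmem
  obtain ⟨τ', hττ', hlτ', hτ'u, hφ₂, hφ₁⟩ := sat_iff.1 hsat
  have flow_then : ∀ q' ≠ q, ∀ T ∈ Icc τ τ', (∀ t ∈ Icc τ T, x t = x₀ + (t - τ) • a q) →
      (x T, T) ∈ X φ₁ φ₂ l u (fun q _ => a q) q' (i - 1) →
      ∃ q' : Q, q' ≠ q ∧ ∃ δ ≥ (0 : ℝ),
        (x₀ + δ • a q, τ + δ) ∈ X φ₁ φ₂ l u (fun q _ => a q) q' (i - 1) ∧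
        ∀ h ∈ Icc (0 : ℝ) δ, φ₁ (x₀ + h • a q) (τ + h) := by
    intro q' hq' T hT hlin hmem
    refine ⟨q', hq', T - τ, sub_nonneg.2 hT.1, ?_, fun h hh => ?_⟩
    · rwa [← hlin T ⟨hT.1, le_rfl⟩, add_sub_cancel]
    · have ht : τ + h ∈ Icc τ T := ⟨by linarith [hh.1], by linarith [hh.2]⟩
      simpa [hlin _ ht] using hφ₁ (τ + h) ⟨ht.1, ht.2.trans hT.2⟩
  by_cases hswitch : ∃ j ≤ c.k, c.q j ≠ q ∧ c.t j < τ'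
  · classical
    obtain ⟨hJk, hqJ, hJτ'⟩ := Nat.find_spec hswitch
    set J := Nat.find hswitch
    have hJ : J ≠ 0 := fun h => hqJ (h ▸ hc0)
    have hlin := hx.eq_add_smul (T := c.t J) fun j hj hjJ => by
      have hjJ' : j < J := lt_of_not_ge fun h => (c.t_mono h hj).not_gt hjJ
      by_contra hne
      exact Nat.find_min hswitch hjJ' ⟨hj, hne, hjJ.trans hJτ'⟩
    refine flow_then (c.q J) hqJ (c.t J) ⟨c.le_t hJk, hJτ'.le⟩ hlin
      ⟨hτ.trans (c.le_t hJk), (c.drop J).relax (by omega), rfl, x, hx.drop hJk,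
        sat_iff.2 ⟨τ', hJτ'.le, hlτ', hτ'u, hφ₂, fun t ht => hφ₁ t ⟨(c.le_t hJk).trans ht.1, ht.2⟩⟩⟩
  · obtain ⟨q', hq'⟩ := exists_ne q
    exact flow_then q' hq' τ' ⟨hττ', le_rfl⟩
      (hx.eq_add_smul fun j hj hjt => by_contra fun hne => hswitch ⟨j, hj, hne, hjt⟩)
      (mem_X_of_sat_immediately (hτ.trans hττ') hlτ' hτ'u hφ₂ (hφ₁ τ' ⟨hττ', le_rfl⟩))

theorem mem_X_succ_of_flow_of_mem_X {q q' : Q} {i : ℕ} {x₀ : E n} {τ δ : ℝ} (hτ : 0 ≤ τ)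
    (hδ : 0 ≤ δ) (hmem : (x₀ + δ • a q, τ + δ) ∈ X φ₁ φ₂ l u (fun q _ => a q) q' i)
    (hφ : ∀ h ∈ Icc (0 : ℝ) δ, φ₁ (x₀ + h • a q) (τ + h)) :
    (x₀, τ) ∈ X φ₁ φ₂ l u (fun q _ => a q) q (i + 1) := by
  classical
  obtain ⟨-, c, -, x, hx, hsat⟩ := hmem
  obtain ⟨τ', hτ', hlτ', hτ'u, hφ₂, hφ₁⟩ := sat_iff.1 hsat
  set y : ℝ → E n := fun t => x₀ + (t - τ) • a q
  have hτδ : τ ≤ τ + δ := by linarith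
  have hy_end : y (τ + δ) = x₀ + δ • a q := by simp [y]
  have htraj := IsTraj.prepend (f := fun q _ => a q) (q := q) hτδ (y := y) (by fun_prop)
    (fun s _ => (hasDerivAt_add_sub_smul _ _ _ s).hasDerivWithinAt) (by rwa [hy_end])
  have hx_eq := piecewise_Iic_eqOn_Ici (hy_end.trans hx.2.1.symm)
  refine ⟨hτ, c.prepend q τ hτδ, rfl, _, by simpa [y] using htraj,
    sat_iff.2 ⟨τ', hτδ.trans hτ', hlτ', hτ'u, by rwa [hx_eq hτ'], fun t ht => ?_⟩⟩
  by_cases htδ : t ≤ τ + δ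
  · rw [piecewise_eq_of_mem _ _ _ (mem_Iic.2 htδ)]
    simpa [y] using hφ (t - τ) ⟨by linarith [ht.1], by linarith⟩
  · rw [hx_eq (le_of_not_ge htδ)]
    exact hφ₁ t ⟨le_of_not_ge htδ, ht.2⟩

end ConstantDynamics

theorem stmt11_general {n : ℕ} (φ₁ φ₂ : E n → ℝ → Prop) (l u : ℝ)
    (Q : Type) [Nontrivial Q] (a : Q → E n)
    (q : Q) (i : ℕ) (hi : 1 ≤ i) (x₀ : E n) (τ : ℝ) (hτ : 0 ≤ τ) :
    (x₀, τ) ∈ X φ₁ φ₂ l u (fun q _ => a q) q i ↔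
      ∃ q' : Q, q' ≠ q ∧ ∃ δ ≥ (0 : ℝ),
        (x₀ + δ • a q, τ + δ) ∈ X φ₁ φ₂ l u (fun q _ => a q) q' (i - 1) ∧
        ∀ h ∈ Set.Icc (0 : ℝ) δ, φ₁ (x₀ + h • a q) (τ + h) := by
  refine ⟨exists_switch_of_mem_X, fun ⟨q', _, δ, hδ, hmem, hφ⟩ => ?_⟩
  obtain ⟨i, rfl⟩ : ∃ j, i = j + 1 := ⟨i - 1, by omega⟩
  rw [Nat.add_sub_cancel] at hmem
  exact mem_X_succ_of_flow_of_mem_X hτ hδ hmem hφ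

/-- Paper's Corollary 2, inductive case: `X q i` for constant dynamics. -/
theorem stmt11 {n : ℕ} (φ₁ φ₂ : E n → ℝ → Prop) (l u : ℝ) (hl : 0 ≤ l) (hlu : l ≤ u)
    (Q : Type) [Fintype Q] [Nontrivial Q] (a : Q → E n)
    (q : Q) (i : ℕ) (hi : 1 ≤ i) (x₀ : E n) (τ : ℝ) (hτ : 0 ≤ τ) :
    (x₀, τ) ∈ X φ₁ φ₂ l u (fun q _ => a q) q i ↔
      ∃ q' : Q, q' ≠ q ∧ ∃ δ ≥ (0 : ℝ),
        (x₀ + δ • a q, τ + δ) ∈ X φ₁ φ₂ l u (fun q _ => a q) q' (i - 1) ∧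
        ∀ h ∈ Set.Icc (0 : ℝ) δ, φ₁ (x₀ + h • a q) (τ + h) :=
  stmt11_general φ₁ φ₂ l u Q a q i hi x₀ τ hτ
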